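/- Let u : ℂ → ℝ be continuous, let M(r) := max_{|λ| = r, Im λ ≥ 0} u(λ), suppose u is subharmonic on the open upper half-plane, and let β ≥ 1 be such that u(λ) ≤ |λ|^β for λ ∈ ℝ with |λ| large. Define N(v) = max(M(|v|), |v|^β) for v ∈ ℂ. Then there is r_0 such that N is subharmonic on {v ∈ ℂ : |v| > r_0}. -/

import Mathlib

open Real

/-- `f` is subharmonic on `s`: upper semicontinuous on `s` and satisfying the
sub-mean-value inequality over all sufficiently small circles at each point. -/
def SubharmonicOn (f : ℂ → ℝ) (s : Set ℂ) : Prop :=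
  UpperSemicontinuousOn f s ∧
  ∀ z ∈ s, ∃ ρ > (0 : ℝ), ∀ w : ℂ, ‖w‖ < ρ →
    f z ≤ (2 * π)⁻¹ * ∫ θ in (0:ℝ)..(2 * π), f (z + Complex.exp (θ * Complex.I) * w)

lemma circle_abs_pos {z w : ℂ} (h : ‖w‖ < ‖z‖) (θ : ℝ) :
    0 < ‖z + Complex.exp (θ * Complex.I) * w‖ := by
  have h1 : ‖Complex.exp (θ * Complex.I) * w‖ = ‖w‖ := by
    simp [Complex.norm_exp]
  have h2 : ‖z‖ ≤ ‖z + Complex.exp (θ * Complex.I) * w‖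
      + ‖Complex.exp (θ * Complex.I) * w‖ := by
    calc ‖z‖ = ‖(z + Complex.exp (θ * Complex.I) * w)
        - Complex.exp (θ * Complex.I) * w‖ := by ring_nf
      _ ≤ _ := by
        rw [sub_eq_add_neg]
        refine (norm_add_le _ _).trans ?_
        simp
  rw [h1] at h2
  linarith

lemma circle_log_mean {z w : ℂ} (h : ‖w‖ < ‖z‖) :
    ∫ θ in (0:ℝ)..(2*π), Real.log (‖z + Complex.exp (θ * Complex.I) * w‖)
      = 2 * π * Real.log (‖z‖) := by
  have hzpos : 0 < ‖z‖ := (norm_nonneg w).trans_lt h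
  have hz : z ≠ 0 := by
    simpa using hzpos.ne'
  set G : ℂ → ℂ := fun ζ => Complex.log (1 + ζ * (w / z)) with hG
  have hmem : ∀ ζ : ℂ, ‖ζ‖ ≤ 1 → (1 + ζ * (w / z)) ∈ Complex.slitPlane := by
    intro ζ hζ
    apply Complex.mem_slitPlane_of_norm_lt_one
    rw [norm_mul, norm_div]
    have hlt : ‖w‖ / ‖z‖ < 1 := (div_lt_one hzpos).2 h
    calc ‖ζ‖ * (‖w‖ / ‖z‖)
        ≤ 1 * (‖w‖ / ‖z‖) := by
          apply mul_le_mul_of_nonneg_right hζ; positivity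
      _ < 1 := by simpa using hlt
  have hdiff : DifferentiableOn ℂ G (Metric.closedBall (0:ℂ) 1) := by
    intro ζ hζ
    apply DifferentiableAt.differentiableWithinAt
    exact DifferentiableAt.clog (by fun_prop) (hmem ζ (by simpa using hζ))
  have hcauchy := hdiff.circleIntegral_sub_inv_smul (w := 0) (by simp)
  have hG0 : G 0 = 0 := by simp [hG]
  rw [hG0, smul_zero] at hcauchy
  -- unfold circle integral
  rw [circleIntegral] at hcauchy
  simp only [deriv_circleMap, circleMap_zero, Complex.ofReal_one, one_mul, sub_zero, smul_eq_mul] at hcauchy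
  have hexpne : ∀ θ : ℝ, Complex.exp (θ * Complex.I) ≠ 0 := fun θ => Complex.exp_ne_zero _
  have hint : ∀ θ : ℝ, (Complex.exp (θ * Complex.I) * Complex.I) *
      ((Complex.exp (θ * Complex.I))⁻¹ * G (Complex.exp (θ * Complex.I)))
      = Complex.I * G (Complex.exp (θ * Complex.I)) := by
    intro θ
    field_simp
  rw [intervalIntegral.integral_congr (g := fun θ : ℝ => Complex.I * G (Complex.exp (θ * Complex.I)))
    (fun θ _ => hint θ)] at hcauchy
  have hGcont : Continuous fun θ : ℝ => G (Complex.exp (θ * Complex.I)) := by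
    rw [continuous_iff_continuousAt]
    intro θ
    exact ContinuousAt.clog (by fun_prop) (hmem _ (by simp [Complex.norm_exp]))
  rw [intervalIntegral.integral_const_mul] at hcauchy
  have hGint : ∫ θ in (0:ℝ)..(2*π), G (Complex.exp (θ * Complex.I)) = 0 := by
    have := hcauchy
    exact (mul_eq_zero.mp this).resolve_left Complex.I_ne_zero
  -- take real parts
  have hre : ∫ θ in (0:ℝ)..(2*π), (G (Complex.exp (θ * Complex.I))).re = 0 := by
    have := Complex.reCLM.intervalIntegral_comp_comm
      (hGcont.intervalIntegrable (μ := MeasureTheory.volume) 0 (2*π))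
    simp only [Complex.reCLM_apply] at this
    rw [this, hGint]; simp
  have hre2 : ∀ θ : ℝ, (G (Complex.exp (θ * Complex.I))).re
      = Real.log (‖z + Complex.exp (θ * Complex.I) * w‖) - Real.log (‖z‖) := by
    intro θ
    have harg : (1 : ℂ) + Complex.exp (θ * Complex.I) * (w / z)
        = (z + Complex.exp (θ * Complex.I) * w) / z := by
      field_simp
    rw [hG]
    simp only [harg, Complex.log_re, norm_div]
    rw [Real.log_div (circle_abs_pos h θ).ne' hzpos.ne']
  rw [intervalIntegral.integral_congr (fun θ _ => hre2 θ)] at hre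
  have hli : IntervalIntegrable
      (fun θ : ℝ => Real.log (‖z + Complex.exp (θ * Complex.I) * w‖))
      MeasureTheory.volume 0 (2*π) := by
    apply Continuous.intervalIntegrable
    rw [continuous_iff_continuousAt]
    intro θ
    have hc1 : ContinuousAt (fun θ : ℝ => ‖z + Complex.exp (θ * Complex.I) * w‖) θ :=
      (continuous_norm.comp
        (by fun_prop : Continuous fun θ : ℝ => z + Complex.exp (θ * Complex.I) * w)).continuousAt
    exact hc1.log (circle_abs_pos h θ).ne'
  rw [intervalIntegral.integral_sub hli (by apply intervalIntegrable_const)] at hre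
  rw [intervalIntegral.integral_const] at hre
  have : (2*π - 0) • Real.log (‖z‖) = 2*π*Real.log (‖z‖) := by
    simp [smul_eq_mul]
  rw [this] at hre
  linarith

lemma circle_cont {z w : ℂ} : Continuous fun θ : ℝ => z + Complex.exp (θ * Complex.I) * w := by
  fun_prop

lemma circle_log_integrable {z w : ℂ} (h : ‖w‖ < ‖z‖) :
    IntervalIntegrable (fun θ : ℝ => Real.log (‖z + Complex.exp (θ * Complex.I) * w‖))
      MeasureTheory.volume 0 (2*π) := by
  apply Continuous.intervalIntegrable
  rw [continuous_iff_continuousAt]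
  intro θ
  have hc1 : ContinuousAt (fun θ : ℝ => ‖z + Complex.exp (θ * Complex.I) * w‖) θ :=
    (continuous_norm.comp circle_cont).continuousAt
  exact hc1.log (circle_abs_pos h θ).ne'

lemma circle_rpow_integrable {z w : ℂ} {β : ℝ} (hβ : 0 ≤ β) :
    IntervalIntegrable (fun θ : ℝ => ‖z + Complex.exp (θ * Complex.I) * w‖ ^ β)
      MeasureTheory.volume 0 (2*π) := by
  apply Continuous.intervalIntegrable
  exact (Real.continuous_rpow_const hβ).comp (continuous_norm.comp circle_cont)

lemma circle_rpow_mean {z w : ℂ} {β : ℝ} (hβ : 0 < β) (h : ‖w‖ < ‖z‖) :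
    2 * π * ‖z‖ ^ β
      ≤ ∫ θ in (0:ℝ)..(2*π), ‖z + Complex.exp (θ * Complex.I) * w‖ ^ β := by
  have hzpos : 0 < ‖z‖ := (norm_nonneg w).trans_lt h
  set c : ℝ := ‖z‖ ^ β with hc
  have hcpos : 0 < c := Real.rpow_pos_of_pos hzpos β
  set L : ℝ → ℝ := fun θ => Real.log (‖z + Complex.exp (θ * Complex.I) * w‖) with hL
  have key : ∀ θ : ℝ, c + β * c * (L θ - Real.log (‖z‖))
      ≤ ‖z + Complex.exp (θ * Complex.I) * w‖ ^ β := by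
    intro θ
    have h1 : ‖z + Complex.exp (θ * Complex.I) * w‖ ^ β
        = Real.exp (β * L θ) := by
      rw [Real.rpow_def_of_pos (circle_abs_pos h θ), mul_comm]
    have h2 : c = Real.exp (β * Real.log (‖z‖)) := by
      rw [hc, Real.rpow_def_of_pos hzpos, mul_comm]
    have h3 := Real.add_one_le_exp (β * (L θ - Real.log (‖z‖)))
    have h4 : Real.exp (β * Real.log (‖z‖))
        * Real.exp (β * (L θ - Real.log (‖z‖))) = Real.exp (β * L θ) := by
      rw [← Real.exp_add]; ring_nf
    have h5 := Real.exp_pos (β * Real.log (‖z‖))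
    have h6 : Real.exp (β * Real.log (‖z‖)) * (β * (L θ - Real.log (‖z‖)) + 1)
        ≤ Real.exp (β * L θ) := by
      calc _ ≤ Real.exp (β * Real.log (‖z‖))
            * Real.exp (β * (L θ - Real.log (‖z‖))) :=
            mul_le_mul_of_nonneg_left h3 h5.le
        _ = _ := h4
    rw [h1, h2]
    nlinarith [h6]
  have hLi := circle_log_integrable h
  have hconst : IntervalIntegrable (fun _ : ℝ => c) MeasureTheory.volume 0 (2*π) :=
    intervalIntegrable_const
  have hli : IntervalIntegrable (fun θ : ℝ => c + β * c * (L θ - Real.log (‖z‖)))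
      MeasureTheory.volume 0 (2*π) :=
    hconst.add (((hLi.sub intervalIntegrable_const)).const_mul _)
  have heq : ∫ θ in (0:ℝ)..(2*π), (c + β * c * (L θ - Real.log (‖z‖)))
      = 2 * π * c := by
    rw [intervalIntegral.integral_add hconst (((hLi.sub intervalIntegrable_const)).const_mul _),
      intervalIntegral.integral_const_mul,
      intervalIntegral.integral_sub hLi intervalIntegrable_const,
      circle_log_mean h, intervalIntegral.integral_const, intervalIntegral.integral_const]
    simp [smul_eq_mul]
  calc 2 * π * c = ∫ θ in (0:ℝ)..(2*π), (c + β * c * (L θ - Real.log (‖z‖))) := heq.symm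
    _ ≤ _ := by
        apply intervalIntegral.integral_mono_on (by positivity) hli (circle_rpow_integrable hβ.le)
        intro θ _
        exact key θ


lemma halfcircle_eq {r : ℝ} (hr : 0 ≤ r) :
    {l : ℂ | ‖l‖ = r ∧ 0 ≤ l.im}
      = (fun θ : ℝ => (r : ℂ) * Complex.exp (θ * Complex.I)) '' Set.Icc 0 π := by
  ext l
  constructor
  · rintro ⟨habs, him⟩
    rcases eq_or_lt_of_le hr with hr0 | hrpos
    · have : l = 0 := by
        have : ‖l‖ = 0 := by rw [habs, ← hr0]
        exact norm_eq_zero.mp this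
      refine ⟨0, ⟨le_refl 0, Real.pi_pos.le⟩, ?_⟩
      simp [this, ← hr0]
    · refine ⟨Complex.arg l, ⟨Complex.arg_nonneg_iff.2 him, Complex.arg_le_pi l⟩, ?_⟩
      simp only
      rw [← habs]
      exact Complex.norm_mul_exp_arg_mul_I l
  · rintro ⟨θ, ⟨hθ0, hθπ⟩, rfl⟩
    constructor
    · rw [norm_mul, Complex.norm_real, Complex.norm_exp]
      simp [abs_of_nonneg hr]
    · have : ((r : ℂ) * Complex.exp (θ * Complex.I)).im = r * Real.sin θ := by
        simp [Complex.mul_im, Complex.exp_ofReal_mul_I_im, Complex.exp_ofReal_mul_I_re]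
      rw [this]
      exact mul_nonneg hr (Real.sin_nonneg_of_nonneg_of_le_pi hθ0 hθπ)

lemma halfcircle_isCompact {r : ℝ} (hr : 0 ≤ r) :
    IsCompact {l : ℂ | ‖l‖ = r ∧ 0 ≤ l.im} := by
  rw [halfcircle_eq hr]
  exact isCompact_Icc.image (by fun_prop)

lemma halfcircle_image_eq (u : ℂ → ℝ) {r : ℝ} (hr : 0 ≤ r) :
    u '' {l : ℂ | ‖l‖ = r ∧ 0 ≤ l.im}
      = (fun θ : ℝ => u ((r : ℂ) * Complex.exp (θ * Complex.I))) '' Set.Icc 0 π := by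
  rw [halfcircle_eq hr, Set.image_image]

lemma le_halfcircle_sSup (u : ℂ → ℝ) (hu : Continuous u) {ζ : ℂ} (him : 0 ≤ ζ.im) :
    u ζ ≤ sSup (u '' {l : ℂ | ‖l‖ = ‖ζ‖ ∧ 0 ≤ l.im}) := by
  apply le_csSup
  · exact (halfcircle_isCompact (norm_nonneg ζ)).bddAbove_image hu.continuousOn
  · exact Set.mem_image_of_mem u ⟨rfl, him⟩

lemma halfcircle_sSup_exists (u : ℂ → ℝ) (hu : Continuous u) {r : ℝ} (hr : 0 ≤ r) :
    ∃ x : ℂ, (‖x‖ = r ∧ 0 ≤ x.im) ∧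
      sSup (u '' {l : ℂ | ‖l‖ = r ∧ 0 ≤ l.im}) = u x := by
  have hne : ({l : ℂ | ‖l‖ = r ∧ 0 ≤ l.im}).Nonempty := by
    refine ⟨(r : ℂ), ?_, ?_⟩ <;> simp [abs_of_nonneg hr]
  obtain ⟨x, hx, hx2⟩ := (halfcircle_isCompact hr).exists_sSup_image_eq hne hu.continuousOn
  exact ⟨x, hx, hx2⟩

lemma halfcircle_sSup_continuous (u : ℂ → ℝ) (hu : Continuous u) :
    Continuous fun v : ℂ => sSup (u '' {l : ℂ | ‖l‖ = ‖v‖ ∧ 0 ≤ l.im}) := by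
  have heq : (fun v : ℂ => sSup (u '' {l : ℂ | ‖l‖ = ‖v‖ ∧ 0 ≤ l.im}))
      = fun v : ℂ => sSup ((fun θ : ℝ =>
        u (((‖v‖ : ℝ) : ℂ) * Complex.exp (θ * Complex.I))) '' Set.Icc 0 π) := by
    funext v
    rw [halfcircle_image_eq u (norm_nonneg v)]
  rw [heq]
  apply isCompact_Icc.continuous_sSup
  have : Continuous fun p : ℂ × ℝ =>
      u (((‖p.1‖ : ℝ) : ℂ) * Complex.exp (p.2 * Complex.I)) := by
    apply hu.comp
    apply Continuous.mul
    · exact Complex.continuous_ofReal.comp (continuous_norm.comp continuous_fst)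
    · exact Complex.continuous_exp.comp
        ((Complex.continuous_ofReal.comp continuous_snd).mul continuous_const)
  exact this

lemma main_aux (u : ℂ → ℝ) (hu : Continuous u)
    (hsub : SubharmonicOn u {l : ℂ | 0 < l.im})
    (β : ℝ) (hβ : 1 ≤ β) (R : ℝ) (hR : ∀ x : ℝ, R ≤ |x| → u x ≤ |x| ^ β) :
    SubharmonicOn
      (fun v : ℂ =>
        max (sSup (u '' {l : ℂ | ‖l‖ = ‖v‖ ∧ 0 ≤ l.im}))
          (‖v‖ ^ β))
      {v : ℂ | max R 0 < ‖v‖} := by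
  have hβ0 : (0:ℝ) ≤ β := by linarith
  set N : ℂ → ℝ := fun v : ℂ =>
      max (sSup (u '' {l : ℂ | ‖l‖ = ‖v‖ ∧ 0 ≤ l.im}))
        (‖v‖ ^ β) with hN
  have hNcont : Continuous N := by
    rw [hN]
    exact (halfcircle_sSup_continuous u hu).max
      ((Real.continuous_rpow_const hβ0).comp continuous_norm)
  constructor
  · exact hNcont.continuousOn.upperSemicontinuousOn
  intro z hz
  have hrpos : 0 < ‖z‖ := (le_max_right R 0).trans_lt hz
  have hRr : R ≤ ‖z‖ := ((le_max_left R 0).trans_lt hz).le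
  have hNint : ∀ w : ℂ, IntervalIntegrable
      (fun θ : ℝ => N (z + Complex.exp (θ * Complex.I) * w)) MeasureTheory.volume 0 (2*π) :=
    fun w => (hNcont.comp circle_cont).intervalIntegrable 0 (2*π)
  have hNge : ∀ (w : ℂ) (θ : ℝ),
      ‖z + Complex.exp (θ * Complex.I) * w‖ ^ β
        ≤ N (z + Complex.exp (θ * Complex.I) * w) := fun w θ => le_max_right _ _
  have hmono : ∀ w : ℂ, ‖w‖ < ‖z‖ →
      ‖z‖ ^ β ≤ (2*π)⁻¹ * ∫ θ in (0:ℝ)..(2*π),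
        N (z + Complex.exp (θ * Complex.I) * w) := by
    intro w hw
    have h1 : ∫ θ in (0:ℝ)..(2*π), ‖z + Complex.exp (θ * Complex.I) * w‖ ^ β
        ≤ ∫ θ in (0:ℝ)..(2*π), N (z + Complex.exp (θ * Complex.I) * w) := by
      apply intervalIntegral.integral_mono_on (by positivity) (circle_rpow_integrable hβ0)
        (hNint w)
      intro θ _
      exact hNge w θ
    have h2 := circle_rpow_mean (by linarith : (0:ℝ) < β) hw
    have h3 : 2 * π * ‖z‖ ^ β
        ≤ ∫ θ in (0:ℝ)..(2*π), N (z + Complex.exp (θ * Complex.I) * w) := h2.trans h1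
    have hπ : (0:ℝ) < 2 * π := by positivity
    calc ‖z‖ ^ β = (2*π)⁻¹ * (2 * π * ‖z‖ ^ β) := by field_simp
      _ ≤ _ := mul_le_mul_of_nonneg_left h3 (by positivity)
  obtain ⟨x, ⟨hxabs, hxim⟩, hxeq⟩ := halfcircle_sSup_exists u hu (norm_nonneg z)
  rcases eq_or_lt_of_le hxim with him0 | himpos
  · -- max is attained on the real axis
    have hxre : x = (x.re : ℂ) := Complex.ext (by simp) (by simp [← him0])
    have habs' : |x.re| = ‖z‖ := by
      calc |x.re| = ‖(x.re : ℂ)‖ := (Complex.norm_real _).trans (Real.norm_eq_abs _) |>.symm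
        _ = ‖x‖ := by rw [← hxre]
        _ = ‖z‖ := hxabs
    have hux : u x ≤ ‖z‖ ^ β := by
      have h := hR x.re (by rw [habs']; exact hRr)
      rw [← hxre, habs'] at h
      exact h
    refine ⟨‖z‖, hrpos, ?_⟩
    intro w hw
    have hNz : N z = ‖z‖ ^ β := by
      simp only [hN, hxeq]
      exact max_eq_right hux
    rw [hNz]
    exact hmono w hw
  · -- max is attained in the open upper half plane
    obtain ⟨ρ₁, hρ₁, hsubm⟩ := hsub.2 x himpos
    refine ⟨min ρ₁ (min x.im (‖z‖)), by positivity, ?_⟩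
    intro w hw
    rw [lt_min_iff, lt_min_iff] at hw
    obtain ⟨hw1, hw2, hw3⟩ := hw
    have hzne : z ≠ 0 := by
      simpa using hrpos.ne'
    set w' : ℂ := (x / z) * w with hw'
    have habsw' : ‖w'‖ = ‖w‖ := by
      rw [hw', norm_mul, norm_div, hxabs, div_self hrpos.ne', one_mul]
    have hmean := hsubm w' (by rw [habsw']; exact hw1)
    have hkey : ∀ θ : ℝ, u (x + Complex.exp (θ * Complex.I) * w')
        ≤ N (z + Complex.exp (θ * Complex.I) * w) := by
      intro θ
      have hpt : x + Complex.exp (θ * Complex.I) * w'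
          = (x / z) * (z + Complex.exp (θ * Complex.I) * w) := by
        rw [hw']; field_simp
      have habspt : ‖x + Complex.exp (θ * Complex.I) * w'‖
          = ‖z + Complex.exp (θ * Complex.I) * w‖ := by
        rw [hpt, norm_mul, norm_div, hxabs, div_self hrpos.ne', one_mul]
      have habsew : ‖Complex.exp (θ * Complex.I) * w'‖ = ‖w‖ := by
        rw [norm_mul, habsw']
        simp [Complex.norm_exp]
      have him2 : 0 ≤ (x + Complex.exp (θ * Complex.I) * w').im := by
        rw [Complex.add_im]
        have h4 : -(‖w‖) ≤ (Complex.exp (θ * Complex.I) * w').im := by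
          rw [← habsew]
          have := Complex.abs_im_le_norm (Complex.exp (θ * Complex.I) * w')
          have h5 := neg_abs_le ((Complex.exp (θ * Complex.I) * w').im)
          linarith
        linarith
      have h6 := le_halfcircle_sSup u hu him2
      rw [habspt] at h6
      exact h6.trans (le_max_left _ _)
    have huint : IntervalIntegrable
        (fun θ : ℝ => u (x + Complex.exp (θ * Complex.I) * w')) MeasureTheory.volume 0 (2*π) :=
      (hu.comp circle_cont).intervalIntegrable 0 (2*π)
    have h7 : ∫ θ in (0:ℝ)..(2*π), u (x + Complex.exp (θ * Complex.I) * w')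
        ≤ ∫ θ in (0:ℝ)..(2*π), N (z + Complex.exp (θ * Complex.I) * w) := by
      apply intervalIntegral.integral_mono_on (by positivity) huint (hNint w)
      intro θ _
      exact hkey θ
    have h8 : u x ≤ (2*π)⁻¹ * ∫ θ in (0:ℝ)..(2*π),
        N (z + Complex.exp (θ * Complex.I) * w) :=
      hmean.trans (mul_le_mul_of_nonneg_left h7 (by positivity))
    have hNz : N z = max (u x) (‖z‖ ^ β) := by
      simp only [hN, hxeq]
    rw [hNz]
    exact max_le h8 (hmono w hw3)

/-- If `u : ℂ → ℝ` is continuous, subharmonic on the open upper half-plane, and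
bounded by `|λ|^β` (with `β ≥ 1`) on the real axis for large `|λ|`, then
`N(v) = max(M(|v|), |v|^β)`, where `M(r)` is the max of `u` on the closed upper
half of the circle of radius `r`, is subharmonic outside some disc. -/
theorem max_halfcircle_sup_subharmonic (u : ℂ → ℝ) (hu : Continuous u)
    (hsub : SubharmonicOn u {l : ℂ | 0 < l.im})
    (β : ℝ) (hβ : 1 ≤ β)
    (hreal : ∃ R : ℝ, ∀ x : ℝ, R ≤ |x| → u x ≤ |x| ^ β) :
    ∃ r₀ : ℝ, SubharmonicOn
      (fun v : ℂ =>
        max (sSup (u '' {l : ℂ | ‖l‖ = ‖v‖ ∧ 0 ≤ l.im}))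
          (‖v‖ ^ β))
      {v : ℂ | r₀ < ‖v‖} := by
  obtain ⟨R, hR⟩ := hreal
  exact ⟨max R 0, main_aux u hu hsub β hβ R hR⟩
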